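/- Let 1 ≤ a < b be integers and let s ∈ (0, 1] be real. Then (1/(2πi)) · ∫₀¹ (γ_{a,b}^s)'(t) / γ_{a,b}^s(t) dt = b; that is, the winding number of the closed curve γ_{a,b}^s around the origin equals b. -/

import Mathlib

/-- The weighted sum of two exponentials
`γ_{a,b}^s(t) = (1-s)·exp(2πi a t) + (1+s)·exp(2πi b t)`. -/
noncomputable def gammaCurve (a b : ℤ) (s t : ℝ) : ℂ :=
  (1 - (s : ℂ)) * Complex.exp (2 * Real.pi * Complex.I * a * t) +
    (1 + (s : ℂ)) * Complex.exp (2 * Real.pi * Complex.I * b * t)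

private lemma hasDerivAt_cexp_mul (k : ℂ) (t : ℝ) :
    HasDerivAt (fun t : ℝ => Complex.exp (k * t)) (k * Complex.exp (k * t)) t := by
  have h1 : HasDerivAt (fun t : ℝ => (t : ℂ)) 1 t := Complex.ofRealCLM.hasDerivAt
  have h2 : HasDerivAt (fun t : ℝ => k * (t : ℂ)) k t := by
    simpa using HasDerivAt.const_mul k h1
  simpa [mul_comm] using h2.cexp

private lemma div_ratio_aux (u k E G d : ℂ) (hu : u ≠ 0) (hE : E ≠ 0) (hG : G ≠ 0) :
    (u * (k * E) * G + u * E * d) / (u * E * G) = k + d / G := by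
  field_simp

/-- For `s ∈ (0, 1]` the winding number of `γ_{a,b}^s` around the origin equals `b`. -/
theorem winding_number_eq_b (a b : ℤ) (ha : 1 ≤ a) (hab : a < b)
    (s : ℝ) (hs : s ∈ Set.Ioc (0 : ℝ) 1) :
    (1 / (2 * Real.pi * Complex.I)) *
      ∫ t in (0:ℝ)..1, deriv (gammaCurve a b s) t / gammaCurve a b s t = b := by
  obtain ⟨hs0, hs1⟩ := hs
  have hπ : (Real.pi : ℂ) ≠ 0 := by exact_mod_cast Real.pi_ne_zero
  set c : ℂ := 2 * Real.pi * Complex.I with hc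
  have hc0 : c ≠ 0 := by simp [hc, Complex.I_ne_zero, hπ]
  have hs1r : (0:ℝ) < 1 + s := by linarith
  have hs1c : (1:ℂ) + s ≠ 0 := by
    intro hcontra
    have : (1:ℝ) + s = 0 := by exact_mod_cast hcontra
    linarith
  set r : ℝ := (1 - s) / (1 + s) with hrdef
  have hr0 : 0 ≤ r := div_nonneg (by linarith) hs1r.le
  have hr1 : r < 1 := by
    rw [hrdef, div_lt_one hs1r]; linarith
  set R : ℂ := (1 - (s:ℂ)) / (1 + s) with hRdef
  have hRr : R = (r : ℂ) := by
    rw [hRdef, hrdef]; push_cast; ring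
  set g : ℝ → ℂ := fun t => 1 + R * Complex.exp (c * ((a : ℂ) - b) * t) with hgdef
  -- the exponential factor has modulus 1
  have habs : ∀ t : ℝ, ‖Complex.exp (c * ((a : ℂ) - b) * t)‖ = 1 := by
    intro t
    have h : c * ((a : ℂ) - b) * t = ((2 * Real.pi * ((a:ℝ) - b) * t : ℝ) : ℂ) * Complex.I := by
      rw [hc]; push_cast; ring
    rw [h, Complex.norm_exp_ofReal_mul_I]
  -- g stays in the right half plane
  have hre : ∀ t : ℝ, 0 < (g t).re := by
    intro t
    have h1 : ‖R * Complex.exp (c * ((a : ℂ) - b) * t)‖ = r := by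
      rw [norm_mul, habs t, hRr, mul_one, Complex.norm_of_nonneg hr0]
    have h2 := (abs_le.mp (Complex.abs_re_le_norm (R * Complex.exp (c * ((a : ℂ) - b) * t)))).1
    rw [h1] at h2
    have h3 : (g t).re = 1 + (R * Complex.exp (c * ((a : ℂ) - b) * t)).re := by
      simp [hgdef]
    rw [h3]; linarith
  have hslit : ∀ t : ℝ, g t ∈ Complex.slitPlane := fun t =>
    Complex.mem_slitPlane_iff.mpr (Or.inl (hre t))
  have hg0 : ∀ t : ℝ, g t ≠ 0 := fun t => Complex.slitPlane_ne_zero (hslit t)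
  -- factorization of the curve
  have hfact : ∀ t : ℝ, gammaCurve a b s t
      = (1 + (s:ℂ)) * Complex.exp (c * b * t) * g t := by
    intro t
    have hR : (1 + (s:ℂ)) * R = 1 - s := by
      rw [hRdef]; field_simp
    have he : Complex.exp (c * b * t) * Complex.exp (c * ((a : ℂ) - b) * t)
        = Complex.exp (c * a * t) := by
      rw [← Complex.exp_add]; ring_nf
    symm
    calc (1 + (s:ℂ)) * Complex.exp (c * b * t) * g t
        = (1 + (s:ℂ)) * Complex.exp (c * b * t)
          + ((1 + (s:ℂ)) * R) * (Complex.exp (c * b * t) * Complex.exp (c * ((a : ℂ) - b) * t)) := by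
          rw [hgdef]; ring
      _ = (1 - (s:ℂ)) * Complex.exp (c * a * t) + (1 + (s:ℂ)) * Complex.exp (c * b * t) := by
          rw [hR, he]; ring
      _ = gammaCurve a b s t := by
          simp only [gammaCurve, ← hc]
  have hγ0 : ∀ t : ℝ, gammaCurve a b s t ≠ 0 := by
    intro t
    rw [hfact t]
    exact mul_ne_zero (mul_ne_zero hs1c (Complex.exp_ne_zero _)) (hg0 t)
  -- derivatives
  set g' : ℝ → ℂ := fun t => R * ((c * ((a : ℂ) - b)) * Complex.exp (c * ((a : ℂ) - b) * t))
    with hg'def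
  have hgderiv : ∀ t : ℝ, HasDerivAt g (g' t) t := by
    intro t
    exact (HasDerivAt.const_mul R (hasDerivAt_cexp_mul (c * ((a : ℂ) - b)) t)).const_add 1
  set D : ℝ → ℂ := fun t =>
    (1 + (s:ℂ)) * ((c * b) * Complex.exp (c * b * t)) * g t
      + ((1 + (s:ℂ)) * Complex.exp (c * b * t)) * g' t with hDdef
  have hγderiv : ∀ t : ℝ, HasDerivAt (gammaCurve a b s) (D t) t := by
    intro t
    have heq : gammaCurve a b s = fun t : ℝ => (1 + (s:ℂ)) * Complex.exp (c * b * t) * g t :=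
      funext hfact
    rw [heq]
    have hE : HasDerivAt (fun t : ℝ => (1 + (s:ℂ)) * Complex.exp (c * (b:ℂ) * t))
        ((1 + (s:ℂ)) * ((c * (b:ℂ)) * Complex.exp (c * (b:ℂ) * t))) t :=
      HasDerivAt.const_mul _ (hasDerivAt_cexp_mul (c * (b:ℂ)) t)
    exact hE.mul (hgderiv t)
  have hderiv : ∀ t : ℝ, deriv (gammaCurve a b s) t = D t := fun t => (hγderiv t).deriv
  have hratio : ∀ t : ℝ, D t / gammaCurve a b s t = c * b + g' t / g t := by
    intro t
    rw [hfact t, hDdef]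
    exact div_ratio_aux _ _ _ _ _ hs1c (Complex.exp_ne_zero _) (hg0 t)
  -- the primitive
  set F : ℝ → ℂ := fun t => c * b * t + Complex.log (g t) with hFdef
  have hFderiv : ∀ t : ℝ, HasDerivAt F (c * b + g' t / g t) t := by
    intro t
    have h1 : HasDerivAt (fun t : ℝ => c * b * (t:ℂ)) (c * b) t := by
      simpa using HasDerivAt.const_mul (c * (b:ℂ)) (Complex.ofRealCLM.hasDerivAt (x := t))
    have h2 : HasDerivAt (fun t : ℝ => Complex.log (g t)) (g' t / g t) t :=
      (hgderiv t).clog_real (hslit t)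
    exact h1.add h2
  -- integrability of the integrand
  have hfun : (fun t : ℝ => deriv (gammaCurve a b s) t / gammaCurve a b s t)
      = fun t => c * b + g' t / g t := by
    funext t; rw [hderiv t, hratio t]
  have hgc : Continuous g := by
    rw [hgdef]
    fun_prop
  have hg'c : Continuous g' := by
    rw [hg'def]
    fun_prop
  have hcont : Continuous fun t : ℝ => c * b + g' t / g t :=
    continuous_const.add (hg'c.div hgc hg0)
  have hint : IntervalIntegrable (fun t : ℝ => deriv (gammaCurve a b s) t / gammaCurve a b s t)
      MeasureTheory.volume 0 1 := by
    rw [hfun]; exact hcont.intervalIntegrable 0 1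
  -- apply FTC
  have key : ∫ t in (0:ℝ)..1, deriv (gammaCurve a b s) t / gammaCurve a b s t = F 1 - F 0 := by
    apply intervalIntegral.integral_eq_sub_of_hasDerivAt (f := F) _ hint
    intro t _
    rw [hderiv t, hratio t]
    exact hFderiv t
  have hg1 : g 1 = g 0 := by
    have e1 : Complex.exp (c * ((a : ℂ) - b) * ((1:ℝ):ℂ)) = 1 := by
      have h : c * ((a : ℂ) - b) * ((1:ℝ):ℂ) = ((a - b : ℤ) : ℂ) * (2 * Real.pi * Complex.I) := by
        rw [hc]; push_cast; ring
      rw [h, Complex.exp_int_mul_two_pi_mul_I]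
    have e0 : Complex.exp (c * ((a : ℂ) - b) * ((0:ℝ):ℂ)) = 1 := by
      norm_num
    simp only [hgdef, e1, e0]
  have hF10 : F 1 - F 0 = c * b := by
    simp only [hFdef, hg1, Complex.ofReal_one, Complex.ofReal_zero]
    ring
  rw [key, hF10]
  field_simp
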